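/- Let p : ℝ^d → (0, ∞) be a continuously differentiable probability density, σ > 0, and x ∈ ℝ^d. Assume that y ↦ (1 + ‖y‖)·p(y)·φ_σ(x', y) and y ↦ ‖∇p(y)‖·φ_σ(x', y) are integrable for all x' in a neighborhood of x, that p(y)·φ_σ(x, y) → 0 as ‖y‖ → ∞, and that differentiation under the integral sign in x is justified by an integrable dominating function, where φ_σ(x, y) = exp(−‖x − y‖²/(2σ²)). Then for every weight ω ∈ ℝ, ∇_x log p_σ(x) = ∫_{ℝ^d} [ω·(∇ log p)(y) + (1 − ω)·(y − x)/σ²] · p(y | x) dy, where p_σ(x) = ∫ p(y)·φ_σ(x, y) dy and p(y | x) = p(y)·φ_σ(x, y)/p_σ(x). That is, the score of the noised marginal equals the posterior expectation of any convex (indeed affine) combination of the PSM label ∇ log p(y) and the DSM label (y − x)/σ², which is the consistency guarantee underlying the Piecewise and Piecewise Weighted losses. -/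

import Mathlib

/-!
Differentiating under the integral sign gives Tweedie's identity
`∇p_σ(x) = σ⁻² ∫ p(y) φ_σ(x, y) (y - x) dy`, so the score `∇ log p_σ = ∇p_σ / p_σ` is the
posterior mean of the DSM label. Since `∇_y φ_σ(x, y) = -∇_x φ_σ(x, y)`, integrating by parts in
`y` turns the same integral into `∫ φ_σ(x, y) ∇p(y) dy = ∫ p(y) φ_σ(x, y) ∇ log p(y) dy`, the
posterior mean of the PSM label. Both labels therefore have the score as posterior mean, hence so
does every affine combination of them.
-/

open MeasureTheory Filter

/-- The (unnormalized) variance-exploding Gaussian transition kernel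
`φ_σ(x, y) = exp(−‖x − y‖²/(2σ²))`. -/
noncomputable def veKernel (d : ℕ) (σ : ℝ) (x y : EuclideanSpace ℝ (Fin d)) : ℝ :=
  Real.exp (-‖x - y‖ ^ 2 / (2 * σ ^ 2))

open InnerProductSpace
open scoped Gradient

section Gradient

variable {E : Type*} [NormedAddCommGroup E] [InnerProductSpace ℝ E] [CompleteSpace E]
  {f : E → ℝ} {f' x : E}

theorem HasGradientAt.const_mul (hf : HasGradientAt f f' x) (c : ℝ) :
    HasGradientAt (fun y => c * f y) (c • f') x := by
  rw [hasGradientAt_iff_hasFDerivAt, map_smul]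
  exact hf.hasFDerivAt.const_mul c

theorem HasGradientAt.log (hf : HasGradientAt f f' x) (hx : f x ≠ 0) :
    HasGradientAt (fun y => Real.log (f y)) ((f x)⁻¹ • f') x := by
  rw [hasGradientAt_iff_hasFDerivAt, map_smul]
  exact hf.hasFDerivAt.log hx

theorem gradient_log (hf : DifferentiableAt ℝ f x) (hx : f x ≠ 0) :
    ∇ (fun y => Real.log (f y)) x = (f x)⁻¹ • ∇ f x :=
  (hf.hasGradientAt.log hx).gradient

theorem ContDiff.continuous_gradient (hf : ContDiff ℝ 1 f) : Continuous (∇ f) :=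
  (toDual ℝ E).symm.continuous.comp (hf.continuous_fderiv one_ne_zero)

theorem hasGradientAt_integral_of_dominated_of_gradient_le {α : Type*} [MeasurableSpace α]
    {μ : Measure α} {F : E → α → ℝ} {F' : E → α → E} {s : Set E} {bound : α → ℝ}
    (hs : s ∈ nhds x) (hF_meas : ∀ᶠ x' in nhds x, AEStronglyMeasurable (F x') μ)
    (hF_int : Integrable (F x) μ) (hF'_meas : AEStronglyMeasurable (F' x) μ)
    (h_bound : ∀ᵐ a ∂μ, ∀ x' ∈ s, ‖F' x' a‖ ≤ bound a) (bound_integrable : Integrable bound μ)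
    (h_diff : ∀ᵐ a ∂μ, ∀ x' ∈ s, HasGradientAt (F · a) (F' x' a) x') :
    HasGradientAt (fun x' => ∫ a, F x' a ∂μ) (∫ a, F' x a ∂μ) x := by
  have hF'_int : Integrable (F' x) μ :=
    bound_integrable.mono' hF'_meas (h_bound.mono fun a ha => ha x (mem_of_mem_nhds hs))
  have hcomm : ∫ a, toDual ℝ E (F' x a) ∂μ = toDual ℝ E (∫ a, F' x a ∂μ) :=
    (toDual ℝ E).toContinuousLinearEquiv.toContinuousLinearMap.integral_comp_commSL (by simp)
      hF'_int
  rw [hasGradientAt_iff_hasFDerivAt, ← hcomm]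
  exact hasFDerivAt_integral_of_dominated_of_fderiv_le hs hF_meas hF_int
    ((toDual ℝ E).continuous.comp_aestronglyMeasurable hF'_meas) (by simpa using h_bound)
    bound_integrable h_diff

end Gradient

section IntegrationByParts

variable {E : Type*} [NormedAddCommGroup E] [InnerProductSpace ℝ E] [FiniteDimensional ℝ E]
  [MeasurableSpace E] [BorelSpace E] {μ : Measure E} [μ.IsAddHaarMeasure] {f g : E → ℝ}

theorem integral_smul_gradient_eq_neg_integral_smul_gradient
    (hf : Differentiable ℝ f) (hg : Differentiable ℝ g)
    (hfg' : Integrable (fun x => f x • ∇ g x) μ) (hf'g : Integrable (fun x => g x • ∇ f x) μ)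
    (hfg : Integrable (fun x => f x * g x) μ) :
    ∫ x, f x • ∇ g x ∂μ = -∫ x, g x • ∇ f x ∂μ := by
  refine ext_inner_left ℝ fun v => ?_
  have hdir : ∀ (u w : E → ℝ) x, inner ℝ v (u x • ∇ w x) = u x * fderiv ℝ w x v := by
    intro u w x
    rw [inner_smul_right, real_inner_comm, ← toDual_apply_apply, toDual_gradient]
  rw [inner_neg_right, ← integral_inner hfg', ← integral_inner hf'g]
  simp only [hdir]
  rw [integral_mul_fderiv_eq_neg_fderiv_mul_of_integrable (f := f) (g := g) _ _ hfg
    (fun x _ => hf x) (fun x _ => hg x)]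
  · simp only [mul_comm]
  · simpa only [hdir, mul_comm] using hf'g.const_inner (𝕜 := ℝ) v
  · simpa only [hdir] using hfg'.const_inner (𝕜 := ℝ) v

end IntegrationByParts

section Moments

variable {E : Type*} [NormedAddCommGroup E] [MeasurableSpace E]
  [OpensMeasurableSpace E] {μ : Measure E} {f : E → ℝ}

theorem MeasureTheory.Integrable.of_one_add_norm_mul (h : Integrable (fun y => (1 + ‖y‖) * f y) μ) :
    Integrable f μ := by
  have hpos (y : E) : 0 < 1 + ‖y‖ := by positivity
  have hmeas : AEStronglyMeasurable f μ :=
    (((continuous_const.add continuous_norm).inv₀ fun y => (hpos y).ne').aestronglyMeasurable.mul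
      h.aestronglyMeasurable).congr (ae_of_all _ fun y => inv_mul_cancel_left₀ (hpos y).ne' _)
  refine h.norm.mono' hmeas (ae_of_all _ fun y => ?_)
  rw [norm_mul, Real.norm_of_nonneg (hpos y).le]
  exact le_mul_of_one_le_left (norm_nonneg _) (le_add_of_nonneg_right (norm_nonneg y))

theorem MeasureTheory.Integrable.smul_sub_of_one_add_norm_mul [NormedSpace ℝ E]
    [SecondCountableTopology E] (h : Integrable (fun y => (1 + ‖y‖) * f y) μ)
    (x : E) : Integrable (fun y => f y • (y - x)) μ := by
  refine (h.norm.const_mul (1 + ‖x‖)).mono'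
    (h.of_one_add_norm_mul.aestronglyMeasurable.smul
      (continuous_id.sub continuous_const).aestronglyMeasurable) (ae_of_all _ fun y => ?_)
  have hdist : ‖y - x‖ ≤ (1 + ‖x‖) * (1 + ‖y‖) := by
    nlinarith [norm_sub_le y x, norm_nonneg x, norm_nonneg y]
  calc ‖f y • (y - x)‖ ≤ ‖f y‖ * ((1 + ‖x‖) * (1 + ‖y‖)) := by
        rw [norm_smul]; gcongr
    _ = (1 + ‖x‖) * ‖(1 + ‖y‖) * f y‖ := by
        rw [norm_mul, Real.norm_of_nonneg (by positivity : (0 : ℝ) ≤ 1 + ‖y‖)]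
        ring

end Moments

theorem integral_smul_add_one_sub_smul_of_integral_eq {α F : Type*} [MeasurableSpace α]
    {μ : Measure α} [NormedAddCommGroup F] [NormedSpace ℝ F] {w : α → ℝ} {a b : α → F} {c : F}
    (ha : Integrable (fun y => w y • a y) μ) (hb : Integrable (fun y => w y • b y) μ)
    (hac : ∫ y, w y • a y ∂μ = c) (hbc : ∫ y, w y • b y ∂μ = c) (ω : ℝ) :
    ∫ y, w y • (ω • a y + (1 - ω) • b y) ∂μ = c := by
  simp only [smul_add, smul_comm (w _)]
  rw [integral_add (ha.fun_smul ω) (hb.fun_smul (1 - ω)), integral_smul, integral_smul, hac, hbc]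
  module

section VEKernel

variable {d : ℕ} {σ : ℝ}

theorem veKernel_pos (x y : EuclideanSpace ℝ (Fin d)) : 0 < veKernel d σ x y :=
  Real.exp_pos _

theorem veKernel_comm (x y : EuclideanSpace ℝ (Fin d)) : veKernel d σ x y = veKernel d σ y x := by
  rw [veKernel, veKernel, norm_sub_rev]

theorem continuous_veKernel (x : EuclideanSpace ℝ (Fin d)) : Continuous (veKernel d σ x) := by
  unfold veKernel
  fun_prop

theorem hasGradientAt_veKernel_left (hσ : σ ≠ 0) (x y : EuclideanSpace ℝ (Fin d)) :
    HasGradientAt (fun x' => veKernel d σ x' y) (((σ ^ 2)⁻¹ * veKernel d σ x y) • (y - x)) x := by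
  have hsq : HasFDerivAt (fun x' => ‖x' - y‖ ^ 2) (2 • innerSL ℝ (x - y)) x := by
    simpa using ((hasFDerivAt_id x).sub_const y).norm_sq
  have hexpo : HasFDerivAt (fun x' => -‖x' - y‖ ^ 2 / (2 * σ ^ 2))
      ((-(2 * σ ^ 2)⁻¹) • 2 • innerSL ℝ (x - y)) x := by
    have hfun : (fun x' => -‖x' - y‖ ^ 2 / (2 * σ ^ 2))
        = fun x' : EuclideanSpace ℝ (Fin d) => (-(2 * σ ^ 2)⁻¹) • ‖x' - y‖ ^ 2 := by
      funext x'
      rw [smul_eq_mul]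
      ring
    exact hfun ▸ hsq.const_smul (-(2 * σ ^ 2)⁻¹)
  refine hexpo.exp.congr_fderiv ?_
  ext v
  simp only [veKernel, toDual_apply_apply, map_smul, map_sub, smul_apply, neg_apply, sub_apply,
    coe_innerSL_apply, neg_smul, smul_neg, nsmul_eq_mul, Nat.cast_ofNat, smul_eq_mul, mul_inv_rev]
  field_simp
  ring

theorem hasGradientAt_veKernel_right (hσ : σ ≠ 0) (x y : EuclideanSpace ℝ (Fin d)) :
    HasGradientAt (veKernel d σ x) (((σ ^ 2)⁻¹ * veKernel d σ x y) • (x - y)) y := by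
  rw [funext (veKernel_comm x)]
  exact hasGradientAt_veKernel_left hσ y x

theorem hasGradientAt_mul_veKernel_left (hσ : σ ≠ 0) (p : EuclideanSpace ℝ (Fin d) → ℝ)
    (x y : EuclideanSpace ℝ (Fin d)) :
    HasGradientAt (fun x' => p y * veKernel d σ x' y)
      (((σ ^ 2)⁻¹ * (p y * veKernel d σ x y)) • (y - x)) x := by
  have h := (hasGradientAt_veKernel_left hσ x y).const_mul (p y)
  rwa [smul_smul, mul_left_comm] at h

end VEKernel

section Tweedie

variable {d : ℕ} {σ : ℝ} {p : EuclideanSpace ℝ (Fin d) → ℝ} {x : EuclideanSpace ℝ (Fin d)}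

theorem integral_mul_veKernel_pos (hp : Continuous p) (hppos : ∀ y, 0 < p y)
    (hint : Integrable (fun y => p y * veKernel d σ x y)) : 0 < ∫ y, p y * veKernel d σ x y :=
  integral_pos_of_integrable_nonneg_nonzero (hp.mul (continuous_veKernel x)) hint
    (fun y => (mul_pos (hppos y) (veKernel_pos x y)).le) (mul_pos (hppos x) (veKernel_pos x x)).ne'

theorem hasGradientAt_integral_mul_veKernel (hp : Continuous p) (hσ : σ ≠ 0)
    (hint : Integrable (fun y => p y * veKernel d σ x y)) {ε : ℝ}
    {bound : EuclideanSpace ℝ (Fin d) → ℝ} (hε : 0 < ε) (hbound : Integrable bound)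
    (hle : ∀ y, ∀ x' ∈ Metric.ball x ε,
      ‖∇ (fun x'' => p y * veKernel d σ x'' y) x'‖ ≤ bound y) :
    HasGradientAt (fun x' => ∫ y, p y * veKernel d σ x' y)
      ((σ ^ 2)⁻¹ • ∫ y, (p y * veKernel d σ x y) • (y - x)) x := by
  have hderiv := hasGradientAt_mul_veKernel_left hσ p
  rw [← integral_smul]
  simp_rw [smul_smul]
  refine hasGradientAt_integral_of_dominated_of_gradient_le
    (F := fun x' y => p y * veKernel d σ x' y)
    (F' := fun x' y => ((σ ^ 2)⁻¹ * (p y * veKernel d σ x' y)) • (y - x'))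
    (Metric.ball_mem_nhds x hε)
    (Eventually.of_forall fun x' => (hp.mul (continuous_veKernel x')).aestronglyMeasurable) hint
    ?_ (ae_of_all _ fun y x' hx' => ?_) hbound (ae_of_all _ fun y x' _ => hderiv x' y)
  · exact ((continuous_const.mul (hp.mul (continuous_veKernel x))).smul
      (continuous_id.sub continuous_const)).aestronglyMeasurable
  · rw [← (hderiv x' y).gradient]
    exact hle y x' hx'

theorem integral_veKernel_smul_gradient (hp : Differentiable ℝ p) (hσ : σ ≠ 0)
    (hgrad : Integrable (fun y => veKernel d σ x y • ∇ p y))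
    (hint : Integrable (fun y => p y * veKernel d σ x y))
    (hmean : Integrable (fun y => (p y * veKernel d σ x y) • (y - x))) :
    ∫ y, veKernel d σ x y • ∇ p y = (σ ^ 2)⁻¹ • ∫ y, (p y * veKernel d σ x y) • (y - x) := by
  have hker : ∀ y, p y • ∇ (veKernel d σ x) y
      = -((σ ^ 2)⁻¹ • ((p y * veKernel d σ x y) • (y - x))) := by
    intro y
    rw [(hasGradientAt_veKernel_right hσ x y).gradient, smul_smul, smul_smul, ← smul_neg,
      neg_sub]
    congr 1
    ring
  rw [integral_smul_gradient_eq_neg_integral_smul_gradient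
    (fun y => (hasGradientAt_veKernel_right hσ x y).differentiableAt) hp hgrad
    (by simpa only [hker] using (hmean.fun_smul (σ ^ 2)⁻¹).fun_neg)
    (by simpa only [mul_comm] using hint)]
  simp only [hker, integral_neg, neg_neg, integral_smul]

end Tweedie

theorem score_eq_posterior_weighted_label_general (d : ℕ)
    (p : EuclideanSpace ℝ (Fin d) → ℝ) (hp : ContDiff ℝ 1 p)
    (hppos : ∀ y, 0 < p y)
    (σ : ℝ) (hσ : 0 < σ) (x : EuclideanSpace ℝ (Fin d))
    (hInt1 : ∀ᶠ x' in nhds x,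
      Integrable (fun y => (1 + ‖y‖) * (p y * veKernel d σ x' y)))
    (hInt2 : ∀ᶠ x' in nhds x,
      Integrable (fun y => ‖gradient p y‖ * veKernel d σ x' y))
    (hDom : ∃ (ε : ℝ) (bound : EuclideanSpace ℝ (Fin d) → ℝ), 0 < ε ∧
      Integrable bound ∧
      ∀ y, ∀ x' ∈ Metric.ball x ε,
        ‖gradient (fun x'' => p y * veKernel d σ x'' y) x'‖ ≤ bound y)
    (ω : ℝ) :
    gradient (fun x' => Real.log (∫ y, p y * veKernel d σ x' y)) x
      = ∫ y, ((p y * veKernel d σ x y) / ∫ z, p z * veKernel d σ x z) •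
          (ω • gradient (fun z => Real.log (p z)) y +
            (1 - ω) • ((σ ^ 2)⁻¹ • (y - x))) := by
  obtain ⟨ε, bound, hε, hbound, hle⟩ := hDom
  have hmoment := hInt1.self_of_nhds
  have hint := hmoment.of_one_add_norm_mul
  have hmean := hmoment.smul_sub_of_one_add_norm_mul x
  have hgrad : Integrable (fun y => veKernel d σ x y • ∇ p y) :=
    hInt2.self_of_nhds.mono'
      ((continuous_veKernel x).smul hp.continuous_gradient).aestronglyMeasurable
      (ae_of_all _ fun y => by rw [norm_smul, Real.norm_of_nonneg (veKernel_pos x y).le, mul_comm])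
  set Z := ∫ y, p y * veKernel d σ x y
  set J := (σ ^ 2)⁻¹ • ∫ y, (p y * veKernel d σ x y) • (y - x)
  have hZ : 0 < Z := integral_mul_veKernel_pos hp.continuous hppos hint
  have hscore : ∇ (fun x' => Real.log (∫ y, p y * veKernel d σ x' y)) x = Z⁻¹ • J :=
    ((hasGradientAt_integral_mul_veKernel hp.continuous hσ.ne' hint hε hbound hle).log
      hZ.ne').gradient
  have hpsm : ∀ y, (p y * veKernel d σ x y / Z) • ∇ (fun z => Real.log (p z)) y
      = Z⁻¹ • (veKernel d σ x y • ∇ p y) := by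
    intro y
    rw [gradient_log (hp.differentiable one_ne_zero y) (hppos y).ne', smul_smul, smul_smul]
    field_simp [(hppos y).ne']
  have hdsm : ∀ y, (p y * veKernel d σ x y / Z) • ((σ ^ 2)⁻¹ • (y - x))
      = Z⁻¹ • (σ ^ 2)⁻¹ • ((p y * veKernel d σ x y) • (y - x)) := by
    intro y
    simp only [smul_smul]
    ring_nf
  rw [hscore]
  refine (integral_smul_add_one_sub_smul_of_integral_eq
    (a := ∇ fun z => Real.log (p z)) (b := fun y => (σ ^ 2)⁻¹ • (y - x)) ?_ ?_ ?_ ?_ ω).symm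
  · simpa only [hpsm] using hgrad.fun_smul Z⁻¹
  · simpa only [hdsm] using (hmean.fun_smul (σ ^ 2)⁻¹).fun_smul Z⁻¹
  · simp only [hpsm, integral_smul, J,
      integral_veKernel_smul_gradient (hp.differentiable one_ne_zero) hσ.ne' hgrad hint hmean]
  · simp only [hdsm, integral_smul, J]

/-- **Consistency of the weighted PSM/DSM label.**
Let `p : ℝ^d → (0, ∞)` be a `C¹` probability density, `σ > 0`, `x ∈ ℝ^d`.  Assume
`y ↦ (1 + ‖y‖) p(y) φ_σ(x', y)` and `y ↦ ‖∇p(y)‖ φ_σ(x', y)` are integrable for `x'`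
near `x`, that `p(y) φ_σ(x, y) → 0` as `‖y‖ → ∞`, and that differentiation under the
integral sign in `x` is justified by an integrable dominating function.  Then for
every weight `ω ∈ ℝ`,
`∇_x log p_σ(x) = ∫ [ω (∇ log p)(y) + (1 − ω)(y − x)/σ²] p(y | x) dy`. -/
theorem score_eq_posterior_weighted_label (d : ℕ)
    (p : EuclideanSpace ℝ (Fin d) → ℝ) (hp : ContDiff ℝ 1 p)
    (hppos : ∀ y, 0 < p y) (hpI : Integrable p) (hpP : ∫ y, p y = 1)
    (σ : ℝ) (hσ : 0 < σ) (x : EuclideanSpace ℝ (Fin d))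
    (hInt1 : ∀ᶠ x' in nhds x,
      Integrable (fun y => (1 + ‖y‖) * (p y * veKernel d σ x' y)))
    (hInt2 : ∀ᶠ x' in nhds x,
      Integrable (fun y => ‖gradient p y‖ * veKernel d σ x' y))
    (hTail : Tendsto (fun y => p y * veKernel d σ x y) (cocompact _) (nhds 0))
    (hDom : ∃ (ε : ℝ) (bound : EuclideanSpace ℝ (Fin d) → ℝ), 0 < ε ∧
      Integrable bound ∧
      ∀ y, ∀ x' ∈ Metric.ball x ε,
        ‖gradient (fun x'' => p y * veKernel d σ x'' y) x'‖ ≤ bound y)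
    (ω : ℝ) :
    gradient (fun x' => Real.log (∫ y, p y * veKernel d σ x' y)) x
      = ∫ y, ((p y * veKernel d σ x y) / ∫ z, p z * veKernel d σ x z) •
          (ω • gradient (fun z => Real.log (p z)) y +
            (1 - ω) • ((σ ^ 2)⁻¹ • (y - x))) :=
  score_eq_posterior_weighted_label_general d p hp hppos σ hσ x hInt1 hInt2 hDom ω
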